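/- arXiv:2601.18041 — 3 statements merged into one kernel-verified Lean document; each statement's English description precedes it below -/
import Mathlib

section
/- Additivity of the nc difference-differential operator: Let Ω be a (u,v)-admissible nc set over Gr^{(d;m)}(A) and f : Ω → M(B) an nc function. Then for all σ ∈ Ω_n, σ' ∈ Ω_{n'} and X, Y ∈ M_{n,n'}(A), (Δ̃^{(d;m)}_{u,v} f)(σ;σ')(X+Y) = (Δ̃^{(d;m)}_{u,v} f)(σ;σ')(X) + (Δ̃^{(d;m)}_{u,v} f)(σ;σ')(Y). -/
open Matrix

/-- `n × n` matrices over `A`. -/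
abbrev Mat (A : Type) (n : ℕ) : Type := Matrix (Fin n) (Fin n) A

/-- `m × m` block matrices with `n × n` blocks over `A`, i.e. `M_m(M_n(A))`. -/
abbrev BMat (A : Type) (m n : ℕ) : Type := Matrix (Fin m) (Fin m) (Mat A n)

section NC

variable {R : Type} [CommRing R] {A : Type} [Ring A]

/-- Membership in the subgroup `H^{(d;m)}_n(A)` of invertible block lower-triangular
matrices `[[X,0],[Y,Z]]` with `X ∈ GL_{m-d}`, `Z ∈ GL_d`. -/
def memH (m d n : ℕ) (hd : d ≤ m) (Γ : BMat A m n) : Prop :=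
  IsUnit Γ ∧
  (∀ i j : Fin m, (i : ℕ) < m - d → m - d ≤ (j : ℕ) → Γ i j = 0) ∧
  IsUnit (Matrix.of fun i j : Fin (m - d) =>
    Γ ⟨(i : ℕ), lt_of_lt_of_le i.isLt (Nat.sub_le m d)⟩
      ⟨(j : ℕ), lt_of_lt_of_le j.isLt (Nat.sub_le m d)⟩) ∧
  IsUnit (Matrix.of fun i j : Fin d =>
    Γ ⟨m - d + (i : ℕ), by have := i.isLt; omega⟩
      ⟨m - d + (j : ℕ), by have := j.isLt; omega⟩)

/-- The relation `X ~ Y` iff `X = Y Γ` for some `Γ ∈ H^{(d;m)}_n(A)`. -/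
def grel (m d n : ℕ) (hd : d ≤ m) (X Y : BMat A m n) : Prop :=
  ∃ Γ : BMat A m n, memH m d n hd Γ ∧ X = Y * Γ

/-- Direct sum of square matrices. -/
def dsumMat {n n' : ℕ} (X : Mat A n) (Y : Mat A n') : Mat A (n + n') :=
  Matrix.reindex finSumFinEquiv finSumFinEquiv (Matrix.fromBlocks X 0 0 Y)

/-- Entrywise block direct sum `X ⊕̃ Y` of elements of `M_m(M_n(A))`, `M_m(M_{n'}(A))`. -/
def dsum {m n n' : ℕ} (X : BMat A m n) (Y : BMat A m n') : BMat A m (n + n') :=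
  Matrix.of fun i j => dsumMat (X i j) (Y i j)

/-- Direct sum of square matrices with entries in a module. -/
def dsumW {W : Type} [AddCommMonoid W] {n n' : ℕ}
    (X : Matrix (Fin n) (Fin n) W) (Y : Matrix (Fin n') (Fin n') W) :
    Matrix (Fin (n + n')) (Fin (n + n')) W :=
  Matrix.reindex finSumFinEquiv finSumFinEquiv (Matrix.fromBlocks X 0 0 Y)

/-- Block upper triangular matrix `[[P, H],[0, Q]]`. -/
def triW {W : Type} [AddCommMonoid W] {n n' : ℕ}
    (P : Matrix (Fin n) (Fin n) W) (H : Matrix (Fin n) (Fin n') W)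
    (Q : Matrix (Fin n') (Fin n') W) :
    Matrix (Fin (n + n')) (Fin (n + n')) W :=
  Matrix.reindex finSumFinEquiv finSumFinEquiv (Matrix.fromBlocks P H 0 Q)

/-- The unipotent upper triangular matrix `[[I, T],[0, I]]` over `R`. -/
def uptri (R : Type) [CommRing R] {p q : ℕ} (T : Matrix (Fin p) (Fin q) R) :
    Matrix (Fin (p + q)) (Fin (p + q)) R :=
  Matrix.reindex finSumFinEquiv finSumFinEquiv (Matrix.fromBlocks 1 T 0 1)

/-- Left multiplication of a representative by `s^{⊕ m}` for a scalar matrix `s` over `R`: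
the similarity action on the nc Grassmannian. -/
def simAct [Algebra R A] {m N : ℕ} (s : Matrix (Fin N) (Fin N) R) (X : BMat A m N) :
    BMat A m N :=
  Matrix.of fun i j => s.map (algebraMap R A) * X i j

/-- Multiplication of a matrix over an `R`-module `W` by a matrix over `R` on the left. -/
def rmulL {W : Type} [AddCommMonoid W] [Module R W] {p q r : ℕ}
    (s : Matrix (Fin p) (Fin q) R) (X : Matrix (Fin q) (Fin r) W) :
    Matrix (Fin p) (Fin r) W :=
  Matrix.of fun i j => ∑ k, s i k • X k j

/-- Multiplication of a matrix over an `R`-module `W` by a matrix over `R` on the right. -/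
def rmulR {W : Type} [AddCommMonoid W] [Module R W] {p q r : ℕ}
    (X : Matrix (Fin p) (Fin q) W) (s : Matrix (Fin q) (Fin r) R) :
    Matrix (Fin p) (Fin r) W :=
  Matrix.of fun i j => ∑ k, s k j • X i k

/-- Vertical concatenation of matrices. -/
def vcat {α : Type} {p p' q : ℕ} (X : Matrix (Fin p) (Fin q) α)
    (Y : Matrix (Fin p') (Fin q) α) : Matrix (Fin (p + p')) (Fin q) α :=
  Matrix.of fun i j =>
    if h : (i : ℕ) < p then X ⟨(i : ℕ), h⟩ j
    else Y ⟨(i : ℕ) - p, by have := i.isLt; omega⟩ j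

/-- The affine embedding `X ↦ [[0, I],[I, X]]` in the case `(d;m) = (1;2)`. -/
def affEmb {n : ℕ} (X : Mat A n) : BMat A 2 n := !![0, 1; 1, X]

/-- The matrix `[[0, X],[0, 0]] ∈ M_{n+n'}(A)` with `X ∈ M_{n,n'}(A)` in the upper right
corner. -/
def cornerMat {n n' : ℕ} (X : Matrix (Fin n) (Fin n') A) : Mat A (n + n') :=
  Matrix.reindex finSumFinEquiv finSumFinEquiv (Matrix.fromBlocks 0 X 0 0)

/-- The representative `(P;Q)_{u,v}(X)` of the element `(σ;σ')_{u,v}(X)`: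
`P ⊕̃ Q + Σ_{j=1}^d [[0, X Q_{v, m-d+j}],[0,0]] ⊗ e^{(m)}_{d+u, m-d+j}`. -/
def ins {m d n n' : ℕ} (hd : d ≤ m) (u : Fin (m - d)) (v : Fin d)
    (P : BMat A m n) (Q : BMat A m n') (X : Matrix (Fin n) (Fin n') A) :
    BMat A m (n + n') :=
  dsum P Q + Matrix.of fun (i j : Fin m) =>
    if (i : ℕ) = d + (u : ℕ) ∧ m - d ≤ (j : ℕ) then
      cornerMat (X * Q ⟨(v : ℕ), lt_of_lt_of_le v.isLt hd⟩ j)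
    else 0

/-- The matrix unit `e^{(md,d)}_{u,v} ⊗ X`. -/
def eMat {md d : ℕ} {n : ℕ} (u : Fin md) (v : Fin d) (X : Mat A n) :
    Matrix (Fin md) (Fin d) (Mat A n) :=
  Matrix.of fun i j => if i = u ∧ j = v then X else 0

/-- The block matrix `[[I_d ⊗ I_n, 0],[-Y, I_{m-d} ⊗ I_n]]` used to define `σ(Y)`. -/
def shiftMat {m d n : ℕ} (hd : d ≤ m) (Y : Matrix (Fin (m - d)) (Fin d) (Mat A n)) :
    BMat A m n :=
  Matrix.of fun i j =>
    (if i = j then (1 : Mat A n) else 0) +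
    (if h : d ≤ (i : ℕ) ∧ (j : ℕ) < d then
      -Y ⟨(i : ℕ) - d, by have := i.isLt; omega⟩ ⟨(j : ℕ), h.2⟩
    else 0)

/-- A family `C` of sets of representatives is an nc set over `Gr^{(d;m)}(A)`:
it consists of invertible matrices, is saturated under the relation `~`
(i.e. it is a set of equivalence classes), and is closed under direct sums. -/
def IsNCSetCarrier {m d : ℕ} (hd : d ≤ m) (C : ∀ n, Set (BMat A m n)) : Prop :=
  (∀ n, ∀ a ∈ C n, IsUnit a) ∧
  (∀ n, ∀ a b : BMat A m n, grel m d n hd a b → (a ∈ C n ↔ b ∈ C n)) ∧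
  (∀ n n', ∀ a ∈ C n, ∀ b ∈ C n', dsum a b ∈ C (n + n'))

/-- `f` is an nc function on the nc set (with carrier) `C` over `Gr^{(d;m)}(A)`:
it descends to equivalence classes, preserves direct sums, and is similarity preserving. -/
def IsNCFun (R : Type) [CommRing R] [Algebra R A] {W : Type} [AddCommMonoid W] [Module R W]
    {m d : ℕ} (hd : d ≤ m) (C : ∀ n, Set (BMat A m n))
    (f : ∀ n, BMat A m n → Matrix (Fin n) (Fin n) W) : Prop :=
  (∀ n, ∀ a ∈ C n, ∀ b ∈ C n, grel m d n hd a b → f n a = f n b) ∧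
  (∀ n n', ∀ a ∈ C n, ∀ b ∈ C n', f (n + n') (dsum a b) = dsumW (f n a) (f n' b)) ∧
  (∀ n (s : (Matrix (Fin n) (Fin n) R)ˣ), ∀ a ∈ C n,
    simAct (s : Matrix (Fin n) (Fin n) R) a ∈ C n →
    f n (simAct (s : Matrix (Fin n) (Fin n) R) a) =
      rmulR (rmulL (s : Matrix (Fin n) (Fin n) R) (f n a))
        ((s⁻¹ : (Matrix (Fin n) (Fin n) R)ˣ) : Matrix (Fin n) (Fin n) R))

/-- `(u,v)`-admissibility of an nc set. -/
def Admissible (R : Type) [CommRing R] [Algebra R A] {m d : ℕ} (hd : d ≤ m)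
    (C : ∀ n, Set (BMat A m n)) (u : Fin (m - d)) (v : Fin d) : Prop :=
  ∀ n n' (a : BMat A m n) (b : BMat A m n') (X : Matrix (Fin n) (Fin n') A),
    a ∈ C n → b ∈ C n' →
    ∃ r : Rˣ, ins hd u v a b ((r : R) • X) ∈ C (n + n')

/-- The similarity-invariant envelope of an nc set. -/
def envC (R : Type) [CommRing R] [Algebra R A] {m d : ℕ} (hd : d ≤ m)
    (C : ∀ n, Set (BMat A m n)) : ∀ n, Set (BMat A m n) :=
  fun n => {x | ∃ (s : (Matrix (Fin n) (Fin n) R)ˣ) (a : BMat A m n),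
    a ∈ C n ∧ grel m d n hd x (simAct (s : Matrix (Fin n) (Fin n) R) a)}

end NC

section Res

variable {R : Type} [CommRing R] {A : Type} [Ring A] [Algebra R A]

/-- Entrywise inclusion `M_m(M_n(B)) → M_m(M_n(A))` for a subalgebra `B ⊆ A`. -/
def bmap (D : Subalgebra R A) {m n : ℕ} (b : BMat (↥D) m n) : BMat A m n :=
  Matrix.of fun i j => (b i j).map (fun x => (x : A))

/-- Entrywise inclusion for rectangular matrices over a subalgebra. -/
def rcmap (D : Subalgebra R A) {n n' : ℕ} (X : Matrix (Fin n) (Fin n') ↥D) :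
    Matrix (Fin n) (Fin n') A :=
  X.map (fun x => (x : A))

/-- `X` is invertible in `M_m(M_n(B))` for the subalgebra `B = D ⊆ A`. -/
def invIn (D : Subalgebra R A) {m n : ℕ} (X : BMat A m n) : Prop :=
  (∀ i j k l, X i j k l ∈ D) ∧
  ∃ Y : BMat A m n, (∀ i j k l, Y i j k l ∈ D) ∧ X * Y = 1 ∧ Y * X = 1

/-- The amplification `a^{⊕̃ n}` of an element `a ∈ M_m(A) = M_m(M_1(A))`. -/
def ampl {m : ℕ} (a : BMat A m 1) (n : ℕ) : BMat A m n :=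
  Matrix.of fun i j => Matrix.diagonal (fun _ => a i j 0 0)

/-- The matrix `r^{(d;m)}(P;Q)`: first `m-d` block columns are the last `m-d` block
columns of `P`, last `d` block columns are the last `d` block columns of `Q`. -/
def rmat {m d n : ℕ} (hd : d ≤ m) (P Q : BMat A m n) : BMat A m n :=
  Matrix.of fun i j =>
    if h : (j : ℕ) < m - d then P i ⟨d + (j : ℕ), by omega⟩ else Q i j

/-- The value `[B_{v,m-d+1},…,B_{v,m}] ⋅ ζ_u` of the `(d;m)`-Grassmannian resolvent,
where `ζ_u` is the `u`-th bottom block column of the inverse `Rinv` of an `r`-matrix. -/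
def resVal {m d n : ℕ} (hd : d ≤ m) (v : Fin d) (u : Fin (m - d))
    (Bm Rinv : BMat A m n) : Mat A n :=
  ∑ j : Fin d,
    Bm ⟨(v : ℕ), lt_of_lt_of_le v.isLt hd⟩ ⟨m - d + (j : ℕ), by have := j.isLt; omega⟩ *
    Rinv ⟨m - d + (j : ℕ), by have := j.isLt; omega⟩ ⟨d + (u : ℕ), by have := u.isLt; omega⟩

/-- Membership in the `(d;m)`-Grassmannian `B`-resolvent set of `π` (represented by `p`):
`b` represents an element of `Gr^{(d;m)}_n(B)` such that `π^{⊕n}` and `b` are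
transversal in `A`. -/
def ResMem {m d : ℕ} (hd : d ≤ m) (p : BMat A m 1) (D : Subalgebra R A) {n : ℕ}
    (b : BMat (↥D) m n) : Prop :=
  IsUnit b ∧ IsUnit (rmat hd (ampl p n) (bmap D b))

end Res

/-!
Admissibility, applied to `σ` and `σ' ⊕ σ'`, gives one unit `ρ` for which
`(σ; σ' ⊕ σ')_{u,v}(ρ [X Y])` lies in `Ω`; up to the coupling blocks it is
`[[σ, ρX, ρY], [0, σ', 0], [0, 0, σ']]`. The block-diagonal scalar matrix `ρ ⊕ [αI; βI]`
intertwines it with `(σ;σ')_{u,v}(αX + βY)`, and nc functions respect scalar intertwiners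
(similarity invariance applied to `[[1, 0], [S, 1]]` acting on a direct sum). Comparing
upper-right corners for `(α, β) = (r₁, 0), (0, r₂), (r₃, r₃)` gives, with `F₁, F₂` the two
corner blocks of `f` at the big point, `ρ H₁ = r₁ F₁`, `ρ H₂ = r₂ F₂` and `ρ H₃ = r₃ (F₁ + F₂)`.
-/

section Rmul

variable {R : Type} [CommRing R] {W : Type} [AddCommMonoid W] [Module R W]

lemma rmulR_rmulR {p q r s : ℕ} (X : Matrix (Fin p) (Fin q) W) (t : Matrix (Fin q) (Fin r) R)
    (t' : Matrix (Fin r) (Fin s) R) : rmulR (rmulR X t) t' = rmulR X (t * t') := by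
  ext i j
  simp only [rmulR, of_apply, mul_apply, Finset.smul_sum, Finset.sum_smul, smul_smul]
  rw [Finset.sum_comm]
  simp only [mul_comm]

lemma rmulR_one {p q : ℕ} (X : Matrix (Fin p) (Fin q) W) :
    rmulR X (1 : Matrix (Fin q) (Fin q) R) = X := by
  ext i j
  simp [rmulR, one_apply, ite_smul]

end Rmul

section NCFun

variable {R : Type} [CommRing R] {A : Type} [Ring A] [Algebra R A]

lemma memH_diagonal_const {m d q : ℕ} (hd : d ≤ m) {g : Mat A q} (hg : IsUnit g) :
    memH m d q hd (diagonal fun _ : Fin m => g) := by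
  have hdiag : ∀ k, IsUnit (diagonal fun _ : Fin k => g) := fun k =>
    (hg.map (Pi.constRingHom (Fin k) (Mat A q))).map (diagonalRingHom (Fin k) (Mat A q))
  refine ⟨hdiag m, fun i j hi hj => diagonal_apply_ne _ (Fin.ne_of_val_ne (by omega)), ?_, ?_⟩
  · convert hdiag (m - d) using 1
    ext i j
    simp [diagonal_apply, Fin.ext_iff]
  · convert hdiag d using 1
    ext i j
    simp [diagonal_apply, Fin.ext_iff]

lemma grel_simAct_self {m d N : ℕ} (hd : d ≤ m) (s : (Matrix (Fin N) (Fin N) R)ˣ)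
    {D : BMat A m N} (hcomm : ∀ i j, Commute ((s : Matrix _ _ R).map (algebraMap R A)) (D i j)) :
    grel m d N hd (simAct (s : Matrix _ _ R) D) D := by
  refine ⟨diagonal fun _ => (algebraMap R A).mapMatrix (s : Matrix _ _ R),
    memH_diagonal_const hd (s.isUnit.map (algebraMap R A).mapMatrix), ?_⟩
  ext1 i j
  simp only [simAct, of_apply, mul_diagonal]
  exact hcomm i j

variable {W : Type} [AddCommMonoid W] [Module R W] {m d : ℕ} {hd : d ≤ m}
  {C : ∀ n, Set (BMat A m n)} {f : ∀ n, BMat A m n → Matrix (Fin n) (Fin n) W}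

lemma IsNCFun.rmulL_eq_rmulR_of_commute (hC : IsNCSetCarrier hd C) (hf : IsNCFun R hd C f)
    {N : ℕ} (s : (Matrix (Fin N) (Fin N) R)ˣ) {D : BMat A m N} (hD : D ∈ C N)
    (hcomm : ∀ i j, Commute ((s : Matrix _ _ R).map (algebraMap R A)) (D i j)) :
    rmulL (s : Matrix _ _ R) (f N D) = rmulR (f N D) (s : Matrix _ _ R) := by
  have hrel := grel_simAct_self hd s hcomm
  have hsD : simAct (s : Matrix _ _ R) D ∈ C N := (hC.2.1 _ _ _ hrel).mpr hD
  have hconj : f N D = rmulR (rmulL (s : Matrix _ _ R) (f N D)) (↑s⁻¹ : Matrix _ _ R) :=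
    (hf.1 _ _ hsD _ hD hrel).symm.trans (hf.2.2 N s D hD hsD)
  rw [hconj, rmulR_rmulR, s.inv_mul, rmulR_one, ← hconj]

lemma IsNCFun.rmulL_eq_rmulR_of_intertwine (hC : IsNCSetCarrier hd C) (hf : IsNCFun R hd C f)
    {N T : ℕ} {p : BMat A m N} (hp : p ∈ C N) {q : BMat A m T} (hq : q ∈ C T)
    (S : Matrix (Fin T) (Fin N) R)
    (hint : ∀ i j, q i j * S.map (algebraMap R A) = S.map (algebraMap R A) * p i j) :
    rmulL S (f N p) = rmulR (f T q) S := by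
  have hmul : ∀ S' : Matrix (Fin T) (Fin N) R,
      reindex finSumFinEquiv finSumFinEquiv (fromBlocks 1 0 S' 1) *
        reindex finSumFinEquiv finSumFinEquiv (fromBlocks 1 0 (-S') 1) =
      (1 : Matrix (Fin (N + T)) (Fin (N + T)) R) := by
    intro S'
    simp [reindex_apply, submatrix_mul_equiv, fromBlocks_multiply]
  let s : (Matrix (Fin (N + T)) (Fin (N + T)) R)ˣ :=
    ⟨reindex finSumFinEquiv finSumFinEquiv (fromBlocks 1 0 S 1),
      reindex finSumFinEquiv finSumFinEquiv (fromBlocks 1 0 (-S) 1), hmul S,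
      by simpa using hmul (-S)⟩
  have hcomm : ∀ i j, Commute ((s : Matrix _ _ R).map (algebraMap R A)) (dsum p q i j) := by
    intro i j
    simp only [Commute, SemiconjBy, s, dsum, dsumMat, of_apply, reindex_apply, ← submatrix_map,
      fromBlocks_map]
    rw [submatrix_mul_equiv, submatrix_mul_equiv, fromBlocks_multiply, fromBlocks_multiply]
    simp [hint]
  have h := hf.rmulL_eq_rmulR_of_commute hC s (hC.2.2 N T p hp q hq) hcomm
  rw [hf.2.1 N T p hp q hq] at h
  ext i j
  have hij := congrFun (congrFun h (Fin.natAdd N i)) (Fin.castAdd T j)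
  simpa [s, rmulL, rmulR, dsumW, Fin.sum_univ_add] using hij

end NCFun

section Insertion

variable {R : Type} [CommRing R] {A : Type} [Ring A] [Algebra R A]

def dsumRect {α : Type} [Zero α] {p q p' q' : ℕ} (U : Matrix (Fin p) (Fin q) α)
    (T : Matrix (Fin p') (Fin q') α) : Matrix (Fin (p + p')) (Fin (q + q')) α :=
  reindex finSumFinEquiv finSumFinEquiv (fromBlocks U 0 0 T)

def insCoupling {m d n' : ℕ} (hd : d ≤ m) (u : Fin (m - d)) (v : Fin d) (Q : BMat A m n')
    (i j : Fin m) : Mat A n' :=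
  if (i : ℕ) = d + (u : ℕ) ∧ m - d ≤ (j : ℕ) then Q ⟨v, lt_of_lt_of_le v.isLt hd⟩ j else 0

variable {m d : ℕ} (hd : d ≤ m) (u : Fin (m - d)) (v : Fin d)

lemma ins_apply {n n' : ℕ} (P : BMat A m n) (Q : BMat A m n') (Z : Matrix (Fin n) (Fin n') A)
    (i j : Fin m) :
    ins hd u v P Q Z i j = triW (P i j) (Z * insCoupling hd u v Q i j) (Q i j) := by
  change dsumMat (P i j) (Q i j) + (if _ then cornerMat _ else 0) = _
  simp only [insCoupling, dsumMat, cornerMat, triW, reindex_apply]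
  split_ifs
  · ext x y
    induction x using Fin.addCases <;> induction y using Fin.addCases <;> simp
  · simp

lemma insCoupling_mul_of_mul {n' k : ℕ} {Q : BMat A m n'} {Q' : BMat A m k}
    {T : Matrix (Fin k) (Fin n') A} (hQ : ∀ i j, Q' i j * T = T * Q i j) (i j : Fin m) :
    insCoupling hd u v Q' i j * T = T * insCoupling hd u v Q i j := by
  unfold insCoupling
  split_ifs
  · exact hQ _ _
  · simp

lemma ins_mul_dsumRect {n n' k : ℕ} (P : BMat A m n) {Q : BMat A m n'}
    {Q' : BMat A m k} {Z : Matrix (Fin n) (Fin n') A} {Z' : Matrix (Fin n) (Fin k) A}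
    (c : R) {T : Matrix (Fin k) (Fin n') A} (hQ : ∀ i j, Q' i j * T = T * Q i j)
    (hZ : Z' * T = c • Z) (i j : Fin m) :
    ins hd u v P Q' Z' i j * dsumRect (c • (1 : Mat A n)) T =
      dsumRect (c • (1 : Mat A n)) T * ins hd u v P Q Z i j := by
  have hcorner : Z' * insCoupling hd u v Q' i j * T = c • (Z * insCoupling hd u v Q i j) := by
    rw [Matrix.mul_assoc, insCoupling_mul_of_mul hd u v hQ, ← Matrix.mul_assoc, hZ, Matrix.smul_mul]
  simp only [ins_apply, triW, dsumRect, reindex_apply]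
  rw [submatrix_mul_equiv, submatrix_mul_equiv, fromBlocks_multiply, fromBlocks_multiply]
  simp [hcorner, hQ]

end Insertion

section VcatScalar

variable {R : Type} [CommRing R] {A : Type} [Ring A] [Algebra R A]

@[simp]
lemma vcat_castAdd {α : Type} {p p' q : ℕ} (X : Matrix (Fin p) (Fin q) α)
    (Y : Matrix (Fin p') (Fin q) α) (i : Fin p) (j : Fin q) :
    vcat X Y (Fin.castAdd p' i) j = X i j := by
  simp [vcat]

@[simp]
lemma vcat_natAdd {α : Type} {p p' q : ℕ} (X : Matrix (Fin p) (Fin q) α)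
    (Y : Matrix (Fin p') (Fin q) α) (i : Fin p') (j : Fin q) :
    vcat X Y (Fin.natAdd p i) j = Y i j := by
  simp [vcat]

def hcat {α : Type} {p q q' : ℕ} (X : Matrix (Fin p) (Fin q) α) (Y : Matrix (Fin p) (Fin q') α) :
    Matrix (Fin p) (Fin (q + q')) α :=
  of fun i => Fin.append (X i) (Y i)

def vcatScalar (α β : R) (k : ℕ) : Matrix (Fin (k + k)) (Fin k) R :=
  vcat (α • 1) (β • 1)

lemma dsumMat_self_mul_vcatScalar {k : ℕ} (α β : R) (M : Mat A k) :
    dsumMat M M * (vcatScalar α β k).map (algebraMap R A) =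
      (vcatScalar α β k).map (algebraMap R A) * M := by
  ext i j
  induction i using Fin.addCases <;>
    simp [vcatScalar, -Fin.natAdd_eq_addNat, dsumMat, mul_apply, Fin.sum_univ_add, one_apply,
      apply_ite (algebraMap R A), mul_ite, ite_mul, Algebra.commutes]

lemma hcat_mul_vcatScalar {n k : ℕ} (X Y : Matrix (Fin n) (Fin k) A) (α β : R) :
    hcat X Y * (vcatScalar α β k).map (algebraMap R A) = α • X + β • Y := by
  ext i j
  simp [hcat, vcatScalar, -Fin.natAdd_eq_addNat, mul_apply, Fin.sum_univ_add,
    Matrix.algebraMap_matrix_apply, apply_ite (algebraMap R A), mul_ite, Algebra.smul_def,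
    Algebra.commutes]

lemma rmulR_vcatScalar {W : Type} [AddCommMonoid W] [Module R W] {n k : ℕ}
    (F : Matrix (Fin n) (Fin (k + k)) W) (α β : R) :
    rmulR F (vcatScalar α β k) =
      α • F.submatrix id (Fin.castAdd k) + β • F.submatrix id (Fin.natAdd k) := by
  ext i j
  simp [vcatScalar, -Fin.natAdd_eq_addNat, rmulR, Fin.sum_univ_add, one_apply, ite_smul]

end VcatScalar

def upperRight {W : Type} {n n' : ℕ} (M : Matrix (Fin (n + n')) (Fin (n + n')) W) :
    Matrix (Fin n) (Fin n') W :=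
  of fun i j => M (Fin.castAdd n' i) (Fin.natAdd n j)

lemma upperRight_triW {W : Type} [AddCommMonoid W] {n n' : ℕ} (P : Matrix (Fin n) (Fin n) W)
    (H : Matrix (Fin n) (Fin n') W) (Q : Matrix (Fin n') (Fin n') W) :
    upperRight (triW P H Q) = H := by
  ext i j
  simp [upperRight, triW]

section Corner

variable {R : Type} [CommRing R] {A : Type} [Ring A] [Algebra R A]
  {W : Type} [AddCommMonoid W] [Module R W] {m d : ℕ} {hd : d ≤ m} {u : Fin (m - d)} {v : Fin d}
  {C : ∀ n, Set (BMat A m n)} {f : ∀ n, BMat A m n → Matrix (Fin n) (Fin n) W}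

lemma map_algebraMap_smul_one {k : ℕ} (c : R) :
    (c • (1 : Matrix (Fin k) (Fin k) R)).map (algebraMap R A) = c • 1 := by
  ext i j
  simp only [map_apply, Matrix.smul_apply, Matrix.one_apply, smul_ite, smul_zero, smul_eq_mul]
  split_ifs <;> simp [Algebra.algebraMap_eq_smul_one]

lemma IsNCFun.smul_upperRight_ins (hC : IsNCSetCarrier hd C) (hf : IsNCFun R hd C f)
    {n n' k : ℕ} {P : BMat A m n} {Q : BMat A m n'} {Q' : BMat A m k}
    {Z : Matrix (Fin n) (Fin n') A} {Z' : Matrix (Fin n) (Fin k) A}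
    (c : R) (T : Matrix (Fin k) (Fin n') R)
    (hQ : ∀ i j, Q' i j * T.map (algebraMap R A) = T.map (algebraMap R A) * Q i j)
    (hZ : Z' * T.map (algebraMap R A) = c • Z)
    (hp : ins hd u v P Q Z ∈ C (n + n')) (hq : ins hd u v P Q' Z' ∈ C (n + k)) :
    c • upperRight (f _ (ins hd u v P Q Z)) = rmulR (upperRight (f _ (ins hd u v P Q' Z'))) T := by
  have hmap : (dsumRect (c • (1 : Matrix (Fin n) (Fin n) R)) T).map (algebraMap R A) =
      dsumRect (c • (1 : Mat A n)) (T.map (algebraMap R A)) := by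
    simp only [dsumRect, reindex_apply, ← submatrix_map, fromBlocks_map, map_algebraMap_smul_one]
    simp
  have h := hf.rmulL_eq_rmulR_of_intertwine hC hp hq (dsumRect (c • 1) T)
    fun i j => hmap ▸ ins_mul_dsumRect hd u v P c hQ hZ i j
  ext i j
  have hij := congrFun (congrFun h (Fin.castAdd k i)) (Fin.natAdd n j)
  simpa [upperRight, rmulL, rmulR, dsumRect, Fin.sum_univ_add, one_apply, mul_smul, ite_smul]
    using hij

lemma IsNCFun.smul_upperRight_ins_of_hcat (hC : IsNCSetCarrier hd C) (hf : IsNCFun R hd C f)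
    {n n' : ℕ} {P : BMat A m n} {Q : BMat A m n'} {X Y Z : Matrix (Fin n) (Fin n') A}
    (ρ α β : R) (hZ : α • X + β • Y = Z) (hp : ins hd u v P Q Z ∈ C (n + n'))
    (hq : ins hd u v P (dsum Q Q) (ρ • hcat X Y) ∈ C (n + (n' + n'))) :
    ρ • upperRight (f _ (ins hd u v P Q Z)) =
      α • (upperRight (f _ (ins hd u v P (dsum Q Q) (ρ • hcat X Y)))).submatrix id
          (Fin.castAdd n') +
        β • (upperRight (f _ (ins hd u v P (dsum Q Q) (ρ • hcat X Y)))).submatrix id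
          (Fin.natAdd n') := by
  rw [← rmulR_vcatScalar]
  refine hf.smul_upperRight_ins hC ρ (vcatScalar α β n')
    (fun i j => dsumMat_self_mul_vcatScalar α β (Q i j)) ?_ hp hq
  rw [Matrix.smul_mul, hcat_mul_vcatScalar, hZ]

end Corner

/-- `(Δ̃ f)(σ;σ')(X)` enters through its defining property: it is `r⁻¹ • H` whenever
`f((σ;σ')_{u,v}(rX)) = [[f σ, H],[0, f σ']]`. -/
theorem diff_value_additive_general {R : Type} [CommRing R] {A : Type} [Ring A] [Algebra R A]
    {W : Type} [AddCommMonoid W] [Module R W]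
    (m d : ℕ) (hd : d ≤ m)
    (C : ∀ n, Set (BMat A m n)) (hC : IsNCSetCarrier hd C)
    (u : Fin (m - d)) (v : Fin d)
    (hadm : Admissible R hd C u v)
    (f : ∀ n, BMat A m n → Matrix (Fin n) (Fin n) W) (hf : IsNCFun R hd C f)
    {n n' : ℕ} (a : BMat A m n) (ha : a ∈ C n) (b : BMat A m n') (hb : b ∈ C n')
    (X Y : Matrix (Fin n) (Fin n') A) (r₁ r₂ r₃ : Rˣ)
    (h₁ : ins hd u v a b ((r₁ : R) • X) ∈ C (n + n'))
    (h₂ : ins hd u v a b ((r₂ : R) • Y) ∈ C (n + n'))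
    (h₃ : ins hd u v a b ((r₃ : R) • (X + Y)) ∈ C (n + n'))
    (H₁ H₂ H₃ : Matrix (Fin n) (Fin n') W)
    (hH₁ : f (n + n') (ins hd u v a b ((r₁ : R) • X)) = triW (f n a) H₁ (f n' b))
    (hH₂ : f (n + n') (ins hd u v a b ((r₂ : R) • Y)) = triW (f n a) H₂ (f n' b))
    (hH₃ : f (n + n') (ins hd u v a b ((r₃ : R) • (X + Y))) = triW (f n a) H₃ (f n' b)) :
    ((r₃⁻¹ : Rˣ) : R) • H₃ = ((r₁⁻¹ : Rˣ) : R) • H₁ + ((r₂⁻¹ : Rˣ) : R) • H₂ := by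
  obtain ⟨ρ, hG⟩ := hadm n (n' + n') a (dsum b b) (hcat X Y) ha (hC.2.2 n' n' b hb b hb)
  have e₁ := hf.smul_upperRight_ins_of_hcat hC ρ r₁ 0 (by simp) h₁ hG
  have e₂ := hf.smul_upperRight_ins_of_hcat hC ρ 0 r₂ (by simp) h₂ hG
  have e₃ := hf.smul_upperRight_ins_of_hcat hC ρ r₃ r₃ (smul_add _ _ _).symm h₃ hG
  rw [hH₁, upperRight_triW] at e₁
  rw [hH₂, upperRight_triW] at e₂
  rw [hH₃, upperRight_triW] at e₃
  rw [← ρ.isUnit.smul_left_cancel, smul_add, smul_comm (ρ : R), smul_comm (ρ : R) _ H₁,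
    smul_comm (ρ : R) _ H₂, e₁, e₂, e₃]
  simp [smul_add, smul_smul]

/-- additivity of the nc difference-differential operator
`Δ̃^{(d;m)}_{u,v} f`, expressed through its defining property:
`(Δ̃ f)(σ;σ')(X) = r⁻¹ ⋅ H` whenever `f((σ;σ')_{u,v}(rX)) = [[f σ, H],[0, f σ']]`. -/
theorem diff_value_additive {R : Type} [CommRing R] {A : Type} [Ring A] [Algebra R A]
    {W : Type} [AddCommMonoid W] [Module R W]
    (m d : ℕ) (hd1 : 1 ≤ d) (hd : d ≤ m)
    (C : ∀ n, Set (BMat A m n)) (hC : IsNCSetCarrier hd C)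
    (u : Fin (m - d)) (v : Fin d)
    (hadm : Admissible R hd C u v)
    (f : ∀ n, BMat A m n → Matrix (Fin n) (Fin n) W) (hf : IsNCFun R hd C f)
    {n n' : ℕ} (a : BMat A m n) (ha : a ∈ C n) (b : BMat A m n') (hb : b ∈ C n')
    (X Y : Matrix (Fin n) (Fin n') A) (r₁ r₂ r₃ : Rˣ)
    (h₁ : ins hd u v a b ((r₁ : R) • X) ∈ C (n + n'))
    (h₂ : ins hd u v a b ((r₂ : R) • Y) ∈ C (n + n'))
    (h₃ : ins hd u v a b ((r₃ : R) • (X + Y)) ∈ C (n + n'))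
    (H₁ H₂ H₃ : Matrix (Fin n) (Fin n') W)
    (hH₁ : f (n + n') (ins hd u v a b ((r₁ : R) • X)) = triW (f n a) H₁ (f n' b))
    (hH₂ : f (n + n') (ins hd u v a b ((r₂ : R) • Y)) = triW (f n a) H₂ (f n' b))
    (hH₃ : f (n + n') (ins hd u v a b ((r₃ : R) • (X + Y))) = triW (f n a) H₃ (f n' b)) :
    ((r₃⁻¹ : Rˣ) : R) • H₃ = ((r₁⁻¹ : Rˣ) : R) • H₁ + ((r₂⁻¹ : Rˣ) : R) • H₂ :=
  diff_value_additive_general m d hd C hC u v hadm f hf a ha b hb X Y r₁ r₂ r₃ h₁ h₂ h₃ H₁ H₂ H₃ hH₁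
    hH₂ hH₃
end

section
/- The Grassmannian B-resolvent is an nc function: for π ∈ Gr^{(m-d;m)}_1(A) and (u,v) ∈ [m-d]×[d], the map R̃^{(d;m)}(π;B|v,u) : ρ̃^{(d;m)}(π;B) → M(A), defined by σ ↦ [B_{v,m-d+1},...,B_{v,m}] · ζ_u where B ∈ σ, a ∈ π, and ζ_u ∈ M_{d,1}(M_n(A)) is the u-th block in the bottom-right part of r^{(d;m)}(a^{⊕̃n};B)^{-1}, is well defined, graded, direct-sum-preserving, and similarity-preserving. -/
/-!
Let `r = r^{(d;m)}(a^{⊕̃n}; B)` and let `Π` be the projection onto the last `d` block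
coordinates. The last `d` block columns of `r` are those of `B`, so the resolvent is the
`(v, d+u)` block of `r Π r⁻¹`. Changing representatives `a ↦ a Γ₀`, `B ↦ B Γ` multiplies `r` on
the right by a block diagonal matrix, and a similarity `s` multiplies `r` by `s^{⊕m}` on the
left and by a block diagonal matrix on the right. Block diagonal matrices commute with `Π`, so
`r Π r⁻¹` is unchanged in the first case and conjugated by `s^{⊕m}` in the second. Direct sums
pass through `r` and its inverse blockwise.
-/

open Matrix

section Resolvent

variable {A : Type} [Ring A]

theorem mul_mul_eq_of_eq_mul_of_commute {M : Type*} [Monoid M] {r r' δ π x x' : M}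
    (hr : r = r' * δ) (hδ : Commute δ π) (hx : r * x = 1) (hx' : x' * r' = 1) :
    r * π * x = r' * π * x' := by
  have hx'_eq : x' = δ * x := by
    calc x' = x' * (r * x) := by rw [hx, mul_one]
      _ = (x' * r') * δ * x := by rw [hr, mul_assoc, mul_assoc, mul_assoc]
      _ = δ * x := by rw [hx', one_mul]
  calc r * π * x = r' * (δ * π) * x := by rw [hr, mul_assoc r']
    _ = r' * π * x' := by rw [hδ.eq, hx'_eq, mul_assoc r', mul_assoc, mul_assoc]

def lastBlocksProj (A : Type) [Ring A] (m d n : ℕ) : BMat A m n :=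
  diagonal fun i => if m - d ≤ (i : ℕ) then 1 else 0

/-- `diag(G₀', G')` with `G₀'` the lower right `(m-d) × (m-d)` corner of `G₀` and `G'` the lower
right `d × d` corner of `G`: the factor by which `r(P G₀; Q G)` differs from `r(P; Q)`. -/
def rdiag (m d : ℕ) {n : ℕ} (G₀ G : BMat A m n) : BMat A m n :=
  Matrix.of fun i j =>
    if hj : (j : ℕ) < m - d then
      if hi : (i : ℕ) < m - d then G₀ ⟨d + (i : ℕ), by omega⟩ ⟨d + (j : ℕ), by omega⟩ else 0
    else if (i : ℕ) < m - d then 0 else G i j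

variable {m d n : ℕ}

theorem rdiag_commute_lastBlocksProj (G₀ G : BMat A m n) :
    Commute (rdiag m d G₀ G) (lastBlocksProj A m d n) := by
  ext i j : 1
  simp only [lastBlocksProj, mul_diagonal, diagonal_mul]
  by_cases hi : (i : ℕ) < m - d <;> by_cases hj : (j : ℕ) < m - d <;>
    simp [rdiag, hi, hj, Nat.not_le.mpr, Nat.not_lt.mp]

theorem rmat_mul_rdiag (hd : d ≤ m) (P Q G₀ G : BMat A m n)
    (hG₀ : ∀ i j : Fin m, (i : ℕ) < d → d ≤ (j : ℕ) → G₀ i j = 0)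
    (hG : ∀ i j : Fin m, (i : ℕ) < m - d → m - d ≤ (j : ℕ) → G i j = 0) :
    rmat hd (P * G₀) (Q * G) = rmat hd P Q * rdiag m d G₀ G := by
  ext i j : 1
  rw [mul_apply]
  by_cases hj : (j : ℕ) < m - d
  · let shift : Fin (m - d) → Fin m := fun k => ⟨d + (k : ℕ), by omega⟩
    let incl : Fin (m - d) → Fin m := fun k => ⟨k, by omega⟩
    have hshift : Function.Injective shift := fun k k' h => by simpa [shift, Fin.ext_iff] using h
    have hincl : Function.Injective incl := fun k k' h => by simpa [incl, Fin.ext_iff] using h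
    simp only [rmat, hj, dite_true, of_apply, mul_apply]
    rw [← Fintype.sum_of_injective shift hshift _ _ ?_ (fun _ => rfl),
      ← Fintype.sum_of_injective incl hincl _ _ ?_ ?_]
    · intro k hk
      have hkm : ¬ (k : ℕ) < m - d := fun h => hk ⟨⟨k, h⟩, rfl⟩
      simp [rdiag, hj, hkm]
    · intro k
      simp [incl, shift, rdiag, hj, k.isLt]
    · intro k hk
      have hkd : (k : ℕ) < d := by
        by_contra h
        exact hk ⟨⟨k - d, by omega⟩, Fin.ext (by simp [shift]; omega)⟩
      rw [hG₀ k _ hkd (by simp), mul_zero]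
  · simp only [rmat, hj, dite_false, of_apply, mul_apply]
    refine Finset.sum_congr rfl fun k _ => ?_
    by_cases hk : (k : ℕ) < m - d
    · simp [rdiag, hj, hk, hG k j hk (Nat.not_lt.mp hj)]
    · simp [rdiag, hj, hk]

theorem resVal_eq_rmat_mul_lastBlocksProj_mul (hd : d ≤ m) (v : Fin d) (u : Fin (m - d))
    (P B X : BMat A m n) :
    resVal hd v u B X = (rmat hd P B * lastBlocksProj A m d n * X)
      ⟨v, lt_of_lt_of_le v.isLt hd⟩ ⟨d + (u : ℕ), by omega⟩ := by
  let shift : Fin d → Fin m := fun k => ⟨m - d + (k : ℕ), by omega⟩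
  have hshift : Function.Injective shift := fun k k' h => by simpa [shift, Fin.ext_iff] using h
  rw [mul_apply, resVal, Fintype.sum_of_injective shift hshift _ _ ?_ ?_]
  · intro k hk
    have hkd : ¬ m - d ≤ (k : ℕ) := fun h =>
      hk ⟨⟨k - (m - d), by omega⟩, Fin.ext (by simp [shift]; omega)⟩
    simp only [lastBlocksProj, mul_diagonal, if_neg hkd, mul_zero, zero_mul]
  · intro k
    have hk : ¬ (m - d + (k : ℕ) < m - d) := by omega
    simp only [shift, lastBlocksProj, mul_diagonal, if_pos (Nat.le_add_right _ _), mul_one, rmat,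
      of_apply, dif_neg hk]

theorem rmat_mul_left (hd : d ≤ m) (L P Q : BMat A m n) :
    rmat hd (L * P) (L * Q) = L * rmat hd P Q := by
  ext i j : 1
  by_cases hj : (j : ℕ) < m - d <;> simp [rmat, hj, mul_apply]

theorem resVal_mul_right (hd : d ≤ m) (v : Fin d) (u : Fin (m - d)) {P B G₀ G X X' : BMat A m n}
    (hG₀ : ∀ i j : Fin m, (i : ℕ) < d → d ≤ (j : ℕ) → G₀ i j = 0)
    (hG : ∀ i j : Fin m, (i : ℕ) < m - d → m - d ≤ (j : ℕ) → G i j = 0)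
    (hX : rmat hd (P * G₀) (B * G) * X = 1) (hX' : X' * rmat hd P B = 1) :
    resVal hd v u (B * G) X = resVal hd v u B X' := by
  rw [resVal_eq_rmat_mul_lastBlocksProj_mul hd v u (P * G₀),
    resVal_eq_rmat_mul_lastBlocksProj_mul hd v u P,
    mul_mul_eq_of_eq_mul_of_commute (rmat_mul_rdiag hd P B G₀ G hG₀ hG)
      (rdiag_commute_lastBlocksProj G₀ G) hX hX']

theorem rmat_diagonal_mul (hd : d ≤ m) {P B : BMat A m n} {c c' : Fin m → Mat A n}
    (hc : diagonal c * diagonal c' = 1) (hP : Commute (diagonal c) P) :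
    rmat hd P (diagonal c * B) = diagonal c * rmat hd P B * rdiag m d (diagonal c') 1 := by
  have hP' : P = diagonal c * (P * diagonal c') := by
    rw [← mul_assoc, hP.eq, mul_assoc, hc, mul_one]
  conv_lhs => rw [hP', ← mul_one B]
  rw [rmat_mul_left, rmat_mul_rdiag, mul_assoc]
  · exact fun i j hi hj => diagonal_apply_ne _ (Fin.ne_of_val_ne (by omega))
  · exact fun i j hi hj => one_apply_ne (Fin.ne_of_val_ne (by omega))

theorem resVal_diagonal_mul (hd : d ≤ m) (v : Fin d) (u : Fin (m - d))
    {P B X X₂ : BMat A m n} {c c' : Fin m → Mat A n}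
    (hc : diagonal c * diagonal c' = 1) (hc' : diagonal c' * diagonal c = 1)
    (hP : Commute (diagonal c) P)
    (hX : X * rmat hd P B = 1) (hX₂ : rmat hd P (diagonal c * B) * X₂ = 1) :
    resVal hd v u (diagonal c * B) X₂ =
      c ⟨v, lt_of_lt_of_le v.isLt hd⟩ * resVal hd v u B X * c' ⟨d + (u : ℕ), by omega⟩ := by
  have hX' : X * diagonal c' * (diagonal c * rmat hd P B) = 1 := by
    rw [mul_assoc, ← mul_assoc (diagonal c'), hc', one_mul, hX]
  rw [resVal_eq_rmat_mul_lastBlocksProj_mul hd v u P,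
    resVal_eq_rmat_mul_lastBlocksProj_mul hd v u P,
    mul_mul_eq_of_eq_mul_of_commute (rmat_diagonal_mul hd hc hP)
      (rdiag_commute_lastBlocksProj _ _) hX₂ hX',
    show diagonal c * rmat hd P B * lastBlocksProj A m d n * (X * diagonal c') =
      diagonal c * (rmat hd P B * lastBlocksProj A m d n * X) * diagonal c' by
        simp only [mul_assoc],
    mul_diagonal, diagonal_mul]

def dsumMatRingHom (n n' : ℕ) : Mat A n × Mat A n' →+* Mat A (n + n') where
  toFun X := dsumMat X.1 X.2
  map_one' := by simp [dsumMat, fromBlocks_one, submatrix_one_equiv]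
  map_mul' X Y := by simp [dsumMat, submatrix_mul_equiv, fromBlocks_multiply]
  map_zero' := by simp [dsumMat]
  map_add' X Y := by
    ext i j
    simp only [dsumMat, reindex_apply, submatrix_apply, Matrix.add_apply]
    cases finSumFinEquiv.symm i <;> cases finSumFinEquiv.symm j <;> simp

theorem dsumMat_mul {n' : ℕ} (X X' : Mat A n) (Y Y' : Mat A n') :
    dsumMat X Y * dsumMat X' Y' = dsumMat (X * X') (Y * Y') :=
  (map_mul (dsumMatRingHom n n') (X, Y) (X', Y')).symm

theorem dsumMat_sum {ι : Type*} (s : Finset ι) {n' : ℕ} (f : ι → Mat A n) (g : ι → Mat A n') :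
    dsumMat (∑ i ∈ s, f i) (∑ i ∈ s, g i) = ∑ i ∈ s, dsumMat (f i) (g i) := by
  have h := map_sum (dsumMatRingHom n n') (fun i => (f i, g i)) s
  rwa [← prod_mk_sum] at h

theorem dsum_mul {n' : ℕ} (X X' : BMat A m n) (Y Y' : BMat A m n') :
    dsum X Y * dsum X' Y' = dsum (X * X') (Y * Y') := by
  ext i j : 1
  simp only [dsum, mul_apply, of_apply, dsumMat_mul, dsumMat_sum]

theorem dsum_one {n' : ℕ} : dsum (1 : BMat A m n) (1 : BMat A m n') = 1 := by
  ext i j : 1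
  simp only [dsum, of_apply]
  by_cases h : i = j
  · rw [h, one_apply_eq, one_apply_eq, one_apply_eq]
    exact map_one (dsumMatRingHom n n')
  · simp only [one_apply_ne h]
    exact map_zero (dsumMatRingHom n n')

theorem rmat_dsum (hd : d ≤ m) {n' : ℕ} (P Q : BMat A m n) (P' Q' : BMat A m n') :
    rmat hd (dsum P P') (dsum Q Q') = dsum (rmat hd P Q) (rmat hd P' Q') := by
  ext i j : 1
  by_cases h : (j : ℕ) < m - d <;> simp [rmat, dsum, h]

theorem resVal_dsum (hd : d ≤ m) (v : Fin d) (u : Fin (m - d)) {n' : ℕ}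
    (B X : BMat A m n) (B' X' : BMat A m n') :
    resVal hd v u (dsum B B') (dsum X X') =
      dsumMat (resVal hd v u B X) (resVal hd v u B' X') := by
  simp only [resVal, dsumMat_sum, dsum, of_apply, dsumMat_mul]

theorem ampl_mul (a b : BMat A m 1) : ampl (a * b) n = ampl a n * ampl b n :=
  map_mul ((scalar (Fin n)).comp (uniqueRingEquiv : Mat A 1 ≃+* A).toRingHom).mapMatrix a b

theorem ampl_dsum {n' : ℕ} (a : BMat A m 1) : ampl a (n + n') = dsum (ampl a n) (ampl a n') := by
  ext i j : 1
  simp [ampl, dsum, dsumMat, fromBlocks_diagonal, submatrix_diagonal_equiv]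

variable {R : Type} [CommRing R] [Algebra R A]

theorem bmap_mul (D : Subalgebra R A) (b c : BMat D m n) : bmap D (b * c) = bmap D b * bmap D c :=
  map_mul (D.val : D →+* A).mapMatrix.mapMatrix b c

theorem bmap_apply_eq_zero (D : Subalgebra R A) {b : BMat D m n} {i j : Fin m} (h : b i j = 0) :
    bmap D b i j = 0 := by
  simp [bmap, h]

theorem bmap_dsum (D : Subalgebra R A) {n' : ℕ} (b : BMat D m n) (b' : BMat D m n') :
    bmap D (dsum b b') = dsum (bmap D b) (bmap D b') := by
  ext i j : 1
  simp only [bmap, dsum, dsumMat, of_apply, reindex_apply, ← submatrix_map, fromBlocks_map]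
  simp

theorem bmap_simAct (D : Subalgebra R A) (s : Matrix (Fin n) (Fin n) R) (b : BMat D m n) :
    bmap D (simAct s b) = simAct s (bmap D b) := by
  ext i j : 1
  change (s.map (algebraMap R D) * b i j).map (D.val : D →+* A) = _
  rw [Matrix.map_mul, Matrix.map_map]
  rfl

theorem simAct_eq_diagonal_mul (s : Matrix (Fin n) (Fin n) R) (X : BMat A m n) :
    simAct s X = diagonal (fun _ => s.map (algebraMap R A)) * X := by
  ext i j : 1
  simp [simAct, diagonal_mul]

theorem diagonal_map_mul_inv (s : (Matrix (Fin n) (Fin n) R)ˣ) :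
    diagonal (fun _ : Fin m => (s : Matrix (Fin n) (Fin n) R).map (algebraMap R A)) *
      diagonal (fun _ => ((s⁻¹ : (Matrix (Fin n) (Fin n) R)ˣ) : Matrix (Fin n) (Fin n) R).map
        (algebraMap R A)) = 1 := by
  rw [diagonal_mul_diagonal, ← Matrix.map_mul, Units.mul_inv,
    Matrix.map_one _ (map_zero _) (map_one _), diagonal_one]

theorem diagonal_map_commute_ampl (s : Matrix (Fin n) (Fin n) R) (a : BMat A m 1) :
    Commute (diagonal fun _ => s.map (algebraMap R A)) (ampl a n) := by
  ext i j k l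
  simp [diagonal_mul, mul_diagonal, ampl, Algebra.commutes]

theorem rmulL_eq_map_mul (s : Matrix (Fin n) (Fin n) R) (X : Mat A n) :
    rmulL s X = s.map (algebraMap R A) * X := by
  ext a b
  simp [rmulL, mul_apply, Algebra.smul_def]

theorem rmulR_eq_mul_map (X : Mat A n) (s : Matrix (Fin n) (Fin n) R) :
    rmulR X s = X * s.map (algebraMap R A) := by
  ext a b
  simp only [rmulR, of_apply, mul_apply, map_apply, Algebra.smul_def]
  exact Finset.sum_congr rfl fun k _ => Algebra.commutes _ _

end Resolvent

theorem resolvent_isNCFun_general {R : Type} [CommRing R] {A : Type} [Ring A] [Algebra R A]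
    (D : Subalgebra R A) (m d : ℕ) (hd : d ≤ m)
    (p : BMat A m 1) (v : Fin d) (u : Fin (m - d)) :
    (∀ (n : ℕ) (b b' : BMat (↥D) m n) (p' : BMat A m 1), IsUnit p' →
      grel m (m - d) 1 (Nat.sub_le m d) p p' →
      ResMem hd p D b → ResMem hd p D b' → grel m d n hd b b' →
      ∀ Rinv Rinv' : BMat A m n,
        rmat hd (ampl p n) (bmap D b) * Rinv = 1 →
        Rinv * rmat hd (ampl p n) (bmap D b) = 1 →
        rmat hd (ampl p' n) (bmap D b') * Rinv' = 1 →
        Rinv' * rmat hd (ampl p' n) (bmap D b') = 1 →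
        resVal hd v u (bmap D b) Rinv = resVal hd v u (bmap D b') Rinv') ∧
    (∀ (n n' : ℕ) (b : BMat (↥D) m n) (b' : BMat (↥D) m n'),
      ResMem hd p D b → ResMem hd p D b' →
      ∀ (Rinv : BMat A m n) (Rinv' : BMat A m n') (Rinv2 : BMat A m (n + n')),
        rmat hd (ampl p n) (bmap D b) * Rinv = 1 →
        Rinv * rmat hd (ampl p n) (bmap D b) = 1 →
        rmat hd (ampl p n') (bmap D b') * Rinv' = 1 →
        Rinv' * rmat hd (ampl p n') (bmap D b') = 1 →
        rmat hd (ampl p (n + n')) (bmap D (dsum b b')) * Rinv2 = 1 →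
        Rinv2 * rmat hd (ampl p (n + n')) (bmap D (dsum b b')) = 1 →
        resVal hd v u (bmap D (dsum b b')) Rinv2 =
          dsumW (resVal hd v u (bmap D b) Rinv) (resVal hd v u (bmap D b') Rinv')) ∧
    (∀ (n : ℕ) (s : (Matrix (Fin n) (Fin n) R)ˣ) (b : BMat (↥D) m n),
      ResMem hd p D b →
      ∀ Rinv Rinv2 : BMat A m n,
        rmat hd (ampl p n) (bmap D b) * Rinv = 1 →
        Rinv * rmat hd (ampl p n) (bmap D b) = 1 →
        rmat hd (ampl p n) (bmap D (simAct (s : Matrix (Fin n) (Fin n) R) b)) * Rinv2 = 1 →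
        Rinv2 * rmat hd (ampl p n) (bmap D (simAct (s : Matrix (Fin n) (Fin n) R) b)) = 1 →
        resVal hd v u (bmap D (simAct (s : Matrix (Fin n) (Fin n) R) b)) Rinv2 =
          rmulR (rmulL (s : Matrix (Fin n) (Fin n) R) (resVal hd v u (bmap D b) Rinv))
            ((s⁻¹ : (Matrix (Fin n) (Fin n) R)ˣ) : Matrix (Fin n) (Fin n) R)) := by
  refine ⟨?_, ?_, ?_⟩
  · rintro n b b' p' - ⟨Γ₀, hΓ₀, rfl⟩ - - ⟨Γ, hΓ, rfl⟩ X X' hX - - hX'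
    rw [ampl_mul, bmap_mul] at hX
    rw [bmap_mul]
    refine resVal_mul_right hd v u (fun i j hi hj => ?_)
      (fun i j hi hj => bmap_apply_eq_zero D (hΓ.2.1 i j hi hj)) hX hX'
    simp [ampl, hΓ₀.2.1 i j (by omega) (by omega)]
  · rintro n n' b b' - - X X' X₂ hX - hX' - - hX₂
    rw [bmap_dsum, ampl_dsum, rmat_dsum] at hX₂
    have hinv : X₂ = dsum X X' :=
      left_inv_eq_right_inv hX₂ (by rw [dsum_mul, hX, hX', dsum_one])
    rw [hinv, bmap_dsum, resVal_dsum]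
    rfl
  · rintro n s b - X X₂ - hX hX₂ -
    rw [bmap_simAct, simAct_eq_diagonal_mul] at hX₂ ⊢
    rw [resVal_diagonal_mul hd v u (diagonal_map_mul_inv (A := A) s)
        (by simpa using diagonal_map_mul_inv (A := A) (m := m) s⁻¹) (diagonal_map_commute_ampl _ p) hX hX₂,
      rmulR_eq_mul_map, rmulL_eq_map_mul]

/-- the `(d;m)`-Grassmannian `B`-resolvent is a well defined nc function:
independent of representatives, direct-sum-preserving, and similarity-preserving. -/
theorem resolvent_isNCFun {R : Type} [CommRing R] {A : Type} [Ring A] [Algebra R A]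
    (D : Subalgebra R A) (m d : ℕ) (hd1 : 1 ≤ d) (hd : d ≤ m)
    (p : BMat A m 1) (hp : IsUnit p) (v : Fin d) (u : Fin (m - d)) :
    (∀ (n : ℕ) (b b' : BMat (↥D) m n) (p' : BMat A m 1), IsUnit p' →
      grel m (m - d) 1 (Nat.sub_le m d) p p' →
      ResMem hd p D b → ResMem hd p D b' → grel m d n hd b b' →
      ∀ Rinv Rinv' : BMat A m n,
        rmat hd (ampl p n) (bmap D b) * Rinv = 1 →
        Rinv * rmat hd (ampl p n) (bmap D b) = 1 →
        rmat hd (ampl p' n) (bmap D b') * Rinv' = 1 →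
        Rinv' * rmat hd (ampl p' n) (bmap D b') = 1 →
        resVal hd v u (bmap D b) Rinv = resVal hd v u (bmap D b') Rinv') ∧
    (∀ (n n' : ℕ) (b : BMat (↥D) m n) (b' : BMat (↥D) m n'),
      ResMem hd p D b → ResMem hd p D b' →
      ∀ (Rinv : BMat A m n) (Rinv' : BMat A m n') (Rinv2 : BMat A m (n + n')),
        rmat hd (ampl p n) (bmap D b) * Rinv = 1 →
        Rinv * rmat hd (ampl p n) (bmap D b) = 1 →
        rmat hd (ampl p n') (bmap D b') * Rinv' = 1 →
        Rinv' * rmat hd (ampl p n') (bmap D b') = 1 →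
        rmat hd (ampl p (n + n')) (bmap D (dsum b b')) * Rinv2 = 1 →
        Rinv2 * rmat hd (ampl p (n + n')) (bmap D (dsum b b')) = 1 →
        resVal hd v u (bmap D (dsum b b')) Rinv2 =
          dsumW (resVal hd v u (bmap D b) Rinv) (resVal hd v u (bmap D b') Rinv')) ∧
    (∀ (n : ℕ) (s : (Matrix (Fin n) (Fin n) R)ˣ) (b : BMat (↥D) m n),
      ResMem hd p D b →
      ∀ Rinv Rinv2 : BMat A m n,
        rmat hd (ampl p n) (bmap D b) * Rinv = 1 →
        Rinv * rmat hd (ampl p n) (bmap D b) = 1 →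
        rmat hd (ampl p n) (bmap D (simAct (s : Matrix (Fin n) (Fin n) R) b)) * Rinv2 = 1 →
        Rinv2 * rmat hd (ampl p n) (bmap D (simAct (s : Matrix (Fin n) (Fin n) R) b)) = 1 →
        resVal hd v u (bmap D (simAct (s : Matrix (Fin n) (Fin n) R) b)) Rinv2 =
          rmulR (rmulL (s : Matrix (Fin n) (Fin n) R) (resVal hd v u (bmap D b) Rinv))
            ((s⁻¹ : (Matrix (Fin n) (Fin n) R)ˣ) : Matrix (Fin n) (Fin n) R)) :=
  resolvent_isNCFun_general D m d hd p v u
end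

section
/- Resolvent of a densely defined closed operator via Halmos dilation: let H be a complex Hilbert space, a ∈ B(H) a pure contraction (‖ax‖ < ‖x‖ for all x ≠ 0), t = Γ(a) the associated densely defined closed operator with t(1−a*a)^{1/2} = a, and π(t) = [[−a*, (1−a*a)^{1/2}],[(1−aa*)^{1/2}, a]]/~ ∈ Gr_1(B(H)). Let B ⊂ B(H) be a unital subalgebra and β ∈ B. Then β̃ = [[0,1],[1,β]]/~ belongs to ρ̃(π(t);B) if and only if β(1−a*a)^{1/2} − a is invertible in B(H), and in this case β − t has bounded inverse (β−t)^{-1} = R̃(π(t);B)(β̃) = (1−a*a)^{1/2}(β(1−a*a)^{1/2} − a)^{-1}. -/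
open Matrix

/-- The representative of the Halmos unitary dilation `[[a₁₁,a₁₂],[a₂₁,a₂₂]]`
as an element of `M_2(M_1(A))`. -/
def rep2 {A : Type} [Ring A] (a11 a12 a21 a22 : A) : BMat A 2 1 :=
  Matrix.of fun i j => Matrix.of fun _ _ => !![a11, a12; a21, a22] i j

/-- A scalar as a `1 × 1` matrix. -/
def constMat {S : Type} (x : S) : Mat S 1 := Matrix.of fun _ _ => x

/-!
The `r`-matrix of `π(t)` and `β̃` is `[[b, 1], [a, β]]`, and
`[[b, 1], [a, β]] = [[0, 1], [a - β b, β]] * [[1, 0], [b, 1]]` with the second factor invertible,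
so the `r`-matrix is invertible iff `β b - a` is. If `w` inverts `β b - a`, then `b w` inverts
`β - t`, because `t b = a` on `dom t = ran b`; and a left inverse `N` of `[[b, 1], [a, β]]`
satisfies `b = N₁₁ (β b - a)`, so the Grassmannian resolvent `N₁₁` equals `b w`.
-/

section TwoByTwo

variable {S : Type*} [Ring S]

theorem isUnit_matrix_zero_one_iff (x y : S) : IsUnit !![0, 1; x, y] ↔ IsUnit x := by
  constructor
  · intro h
    obtain ⟨N, hr, hl⟩ := isUnit_iff_exists.mp h
    have h₁₁ : N 1 1 = 0 := by simpa [Matrix.mul_apply] using congrFun (congrFun hr 0) 1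
    have hxN : x * N 0 1 + y * N 1 1 = 1 := by
      simpa [Matrix.mul_apply] using congrFun (congrFun hr 1) 1
    have hNx : N 0 1 * x = 1 := by simpa [Matrix.mul_apply] using congrFun (congrFun hl 0) 0
    rw [h₁₁, mul_zero, add_zero] at hxN
    exact isUnit_iff_exists.mpr ⟨_, hxN, hNx⟩
  · intro hx
    obtain ⟨x', hxx', hx'x⟩ := isUnit_iff_exists.mp hx
    refine isUnit_iff_exists.mpr ⟨!![-(x' * y), x'; 1, 0], ?_, ?_⟩ <;>
      ext i j <;> fin_cases i <;> fin_cases j <;>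
        simp [Matrix.mul_apply, ← mul_assoc, hxx', hx'x]

theorem isUnit_matrix_one_zero_one (b : S) : IsUnit !![1, 0; b, 1] :=
  isUnit_iff_exists.mpr ⟨!![1, 0; -b, 1], by ext i j; fin_cases i <;> fin_cases j <;> simp,
    by ext i j; fin_cases i <;> fin_cases j <;> simp⟩

theorem matrix_eq_mul_lower_unitriangular (a b y : S) :
    !![b, 1; a, y] = !![0, 1; a - y * b, y] * !![1, 0; b, 1] := by
  ext i j; fin_cases i <;> fin_cases j <;> simp

theorem isUnit_matrix_iff_isUnit_mul_sub (a b y : S) :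
    IsUnit !![b, 1; a, y] ↔ IsUnit (y * b - a) := by
  rw [matrix_eq_mul_lower_unitriangular, ← (isUnit_matrix_one_zero_one b).unit_spec,
    Units.isUnit_mul_units, isUnit_matrix_zero_one_iff, ← IsUnit.neg_iff, neg_sub]

theorem matrix_inv_apply_one_one {a b y w : S} {N : Matrix (Fin 2) (Fin 2) S}
    (hN : N * !![b, 1; a, y] = 1) (hw : (y * b - a) * w = 1) : N 1 1 = b * w := by
  have h₁₀ : N 1 0 * b + N 1 1 * a = 0 := by
    simpa [Matrix.mul_apply] using congrFun (congrFun hN 1) 0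
  have h₁₁ : N 1 0 + N 1 1 * y = 1 := by
    simpa [Matrix.mul_apply] using congrFun (congrFun hN 1) 1
  have hb : b = N 1 1 * (y * b - a) := by
    calc b = (N 1 0 + N 1 1 * y) * b := by rw [h₁₁, one_mul]
      _ = N 1 1 * (y * b - a) := by
        rw [add_mul, eq_neg_of_add_eq_zero_left h₁₀]; noncomm_ring
  rw [hb, mul_assoc, hw, mul_one]

end TwoByTwo

section QuotientOperator

variable {R : Type*} [Ring R] {E : Type*} [TopologicalSpace E] [AddCommGroup E] [Module R E]
  [IsTopologicalAddGroup E] {t : E →ₗ.[R] E} {a b β w : E →L[R] E}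

theorem LinearPMap.exists_sub_apply_mul_eq_self (hb : ∀ x, b x ∈ t.domain)
    (ht : ∀ x (hx : b x ∈ t.domain), t ⟨b x, hx⟩ = a x) (hw : (β * b - a) * w = 1) (x : E) :
    ∃ hx : (b * w) x ∈ t.domain, β ((b * w) x) - t ⟨(b * w) x, hx⟩ = x :=
  ⟨hb (w x), by
    change β (b (w x)) - t ⟨b (w x), hb (w x)⟩ = x
    rw [ht]
    simpa using congr($hw x)⟩

theorem LinearPMap.mul_apply_sub_apply_eq_self
    (hdom : t.domain ≤ LinearMap.range (b : E →ₗ[R] E))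
    (ht : ∀ x (hx : b x ∈ t.domain), t ⟨b x, hx⟩ = a x) (hw : w * (β * b - a) = 1)
    (y : E) (hy : y ∈ t.domain) : (b * w) (β y - t ⟨y, hy⟩) = y := by
  obtain ⟨x, rfl⟩ := hdom hy
  rw [show t ⟨_, hy⟩ = a x from ht x hy]
  simpa using congr(b ($hw x))

end QuotientOperator

theorem constMat_apply_zero_zero {S : Type} (M : Mat S 1) : constMat (M 0 0) = M := by
  ext i j
  simp [constMat, Subsingleton.elim i 0, Subsingleton.elim j 0]

section Grassmannian

variable {A : Type} [Ring A]

variable (A) in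
def bmatOneRingEquiv (m : ℕ) : BMat A m 1 ≃+* Matrix (Fin m) (Fin m) A :=
  Matrix.uniqueRingEquiv.mapMatrix

theorem bmatOneRingEquiv_apply {m : ℕ} (X : BMat A m 1) (i j : Fin m) :
    bmatOneRingEquiv A m X i j = X i j 0 0 :=
  rfl

theorem isUnit_affEmb {n : ℕ} (X : Mat A n) : IsUnit (affEmb X) :=
  (isUnit_matrix_zero_one_iff 1 X).mpr isUnit_one

variable {R : Type} [CommRing R] [Algebra R A]

theorem bmatOneRingEquiv_rmat_rep2_affEmb (p₁₁ p₁₂ p₂₁ p₂₂ : A) (D : Subalgebra R A) (β : D) :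
    bmatOneRingEquiv A 2 (rmat (by norm_num : 1 ≤ 2) (ampl (rep2 p₁₁ p₁₂ p₂₁ p₂₂) 1)
      (bmap D (affEmb (constMat β)))) = !![p₁₂, 1; p₂₂, (β : A)] := by
  ext i j
  fin_cases i <;> fin_cases j <;>
    simp [bmatOneRingEquiv_apply, rmat, ampl, rep2, bmap, affEmb, constMat]

theorem resVal_bmap_affEmb {n : ℕ} (D : Subalgebra R A) (X : Mat D n) (N : BMat A 2 n) :
    resVal (by norm_num : 1 ≤ 2) 0 ⟨0, by norm_num⟩ (bmap D (affEmb X)) N = N 1 1 := by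
  simp [resVal, bmap, affEmb]

end Grassmannian

/-- resolvent of a densely defined closed operator via the Halmos
dilation: `β̃ ∈ ρ̃(π(t);B)` iff `β(1-a*a)^{1/2} - a` is invertible in `B(H)`, and in
that case `β - t` has the bounded inverse `(1-a*a)^{1/2}(β(1-a*a)^{1/2} - a)⁻¹`,
which equals the Grassmannian resolvent `R̃(π(t);B)(β̃)`. -/
theorem halmos_resolvent {H : Type} [NormedAddCommGroup H] [InnerProductSpace ℂ H]
    [CompleteSpace H]
    (a b c : H →L[ℂ] H)
    (t : H →ₗ.[ℂ] H)
    (hdom : t.domain = LinearMap.range (b : H →ₗ[ℂ] H))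
    (ht : ∀ (x : H) (hx : b x ∈ t.domain), t ⟨b x, hx⟩ = a x)
    (D : Subalgebra ℂ (H →L[ℂ] H)) (β : ↥D) :
    (ResMem (show (1:ℕ) ≤ 2 by norm_num)
        (rep2 (-(ContinuousLinearMap.adjoint a)) b c a) D (affEmb (constMat β)) ↔
      IsUnit ((β : H →L[ℂ] H) * b - a)) ∧
    (∀ w : H →L[ℂ] H,
      ((β : H →L[ℂ] H) * b - a) * w = 1 → w * ((β : H →L[ℂ] H) * b - a) = 1 →
      (∀ x : H, ∃ hx : (b * w) x ∈ t.domain,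
        (β : H →L[ℂ] H) ((b * w) x) - t ⟨(b * w) x, hx⟩ = x) ∧
      (∀ y (hy : y ∈ t.domain), (b * w) ((β : H →L[ℂ] H) y - t ⟨y, hy⟩) = y) ∧
      (∀ Rinv : BMat (H →L[ℂ] H) 2 1,
        rmat (show (1:ℕ) ≤ 2 by norm_num)
            (ampl (rep2 (-(ContinuousLinearMap.adjoint a)) b c a) 1)
            (bmap D (affEmb (constMat β))) * Rinv = 1 →
        Rinv * rmat (show (1:ℕ) ≤ 2 by norm_num)
            (ampl (rep2 (-(ContinuousLinearMap.adjoint a)) b c a) 1)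
            (bmap D (affEmb (constMat β))) = 1 →
        resVal (show (1:ℕ) ≤ 2 by norm_num) (0 : Fin 1) (⟨0, by norm_num⟩ : Fin (2 - 1))
            (bmap D (affEmb (constMat β))) Rinv = constMat (b * w))) := by
  have hr := bmatOneRingEquiv_rmat_rep2_affEmb (-(ContinuousLinearMap.adjoint a)) b c a D β
  refine ⟨?_, fun w hw₁ hw₂ => ⟨?_, ?_, ?_⟩⟩
  · rw [ResMem, and_iff_right (isUnit_affEmb _), ← isUnit_map_iff (bmatOneRingEquiv _ 2),
      hr, isUnit_matrix_iff_isUnit_mul_sub]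
  · exact LinearPMap.exists_sub_apply_mul_eq_self (fun x => hdom ▸ ⟨x, rfl⟩) ht hw₁
  · exact LinearPMap.mul_apply_sub_apply_eq_self hdom.le ht hw₂
  · intro Rinv _ hRinv
    have hinv := congr(bmatOneRingEquiv _ 2 $hRinv)
    rw [map_mul, map_one, hr] at hinv
    rw [resVal_bmap_affEmb, ← constMat_apply_zero_zero (Rinv 1 1),
      ← bmatOneRingEquiv_apply Rinv, matrix_inv_apply_one_one hinv hw₁]
end
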